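/- arXiv:0906.4018 — 3 statements merged into one kernel-verified Lean document; each statement's English description precedes it below -/
import Mathlib

section
/- For ṽ ∈ ℝ and N ≥ 1, the union over k ∈ {1,…,N} of the sets {z ∈ ℝ : √(ṽ² + sin²(πk/N)) ≤ |z| ≤ √(5 + ṽ² + 4cos(πk/N))} ∪ {z : √(ṽ² + sin²(πk/N)) ≤ |z| ≤ √(5 + ṽ² − 4cos(πk/N))} equals [−√(9+ṽ²), √(9+ṽ²)] \ (−|ṽ|, |ṽ|). -/
/-!
Every band lies in the annulus `|ṽ| ≤ |z| ≤ √(9 + ṽ²)`, since `sin² ≥ 0` and `|4 cos| ≤ 4`.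
Conversely, for `k = N` we have `sin π = 0` and `cos π = -1`, so the second band is the whole annulus.
-/

theorem Set.Icc_neg_diff_Ioo_neg {α : Type*} [AddCommGroup α] [LinearOrder α]
    [IsOrderedAddMonoid α] (a b : α) :
    Set.Icc (-b) b \ Set.Ioo (-a) a = {z | a ≤ |z| ∧ |z| ≤ b} := by
  ext z
  simp only [Set.mem_sdiff, Set.mem_Icc, Set.mem_Ioo, Set.mem_ofPred_eq, ← abs_le, ← abs_lt,
    not_lt]
  exact and_comm

theorem Set.setOf_abs_mem_Icc_mono {α : Type*} [AddGroup α] [LinearOrder α]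
    {a a' b b' : α} (ha : a' ≤ a) (hb : b ≤ b') :
    {z : α | a ≤ |z| ∧ |z| ≤ b} ⊆ {z | a' ≤ |z| ∧ |z| ≤ b'} :=
  fun _ ⟨h₁, h₂⟩ => ⟨ha.trans h₁, h₂.trans hb⟩

open Real in
theorem armchair_unperturbed_spectrum (N : ℕ) (hN : 1 ≤ N) (vt : ℝ) :
    (⋃ k ∈ Finset.Icc 1 N,
      ({z : ℝ | Real.sqrt (vt ^ 2 + Real.sin (π * k / N) ^ 2) ≤ |z| ∧
          |z| ≤ Real.sqrt (5 + vt ^ 2 + 4 * Real.cos (π * k / N))} ∪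
       {z : ℝ | Real.sqrt (vt ^ 2 + Real.sin (π * k / N) ^ 2) ≤ |z| ∧
          |z| ≤ Real.sqrt (5 + vt ^ 2 - 4 * Real.cos (π * k / N))})) =
    Set.Icc (-Real.sqrt (9 + vt ^ 2)) (Real.sqrt (9 + vt ^ 2)) \
      Set.Ioo (-|vt|) |vt| := by
  rw [Set.Icc_neg_diff_Ioo_neg]
  apply Set.Subset.antisymm
  · refine Set.iUnion₂_subset fun k _ => Set.union_subset ?_ ?_ <;>
    · have := cos_le_one (π * k / N)
      have := neg_one_le_cos (π * k / N)
      exact Set.setOf_abs_mem_Icc_mono (abs_le_sqrt (le_add_of_nonneg_right (sq_nonneg _)))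
        (sqrt_le_sqrt (by linarith))
  · have hθ : π * N / N = π := mul_div_cancel_right₀ π (Nat.cast_ne_zero.mpr (by omega))
    refine Set.subset_iUnion₂_of_subset N (Finset.mem_Icc.mpr ⟨hN, le_rfl⟩)
      (Set.subset_union_of_subset_right ?_ _)
    rw [hθ, sin_pi, cos_pi, show 5 + vt ^ 2 - 4 * (-1 : ℝ) = 9 + vt ^ 2 by ring]
    norm_num [sqrt_sq_eq_abs]
end

section
/- Let a > 0, φ ∈ ℝ, p ≥ 1 and consider the 2p×2p matrix K⁰(e^{iφ}, a) with (K⁰)_{n,n+1} = (K⁰)_{n+1,n} alternating between 1 and a (starting with 1), corner entries (K⁰)_{1,2p} = a/e^{iφ}, (K⁰)_{2p,1} = e^{iφ}a, and zeros elsewhere. Then the eigenvalues of K⁰(e^{iφ}, a) are exactly the numbers ±|a + e^{i(φ+2πn)/p}| for n ∈ {1,…,p}. -/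
/-!
The matrix `K⁰(τ, a)` commutes with the shift by two sites twisted by `τ`, so it is diagonalised
by Bloch waves `x_{2k} = ωᵏ u`, `x_{2k+1} = ωᵏ⁺¹ v` with `ωᵖ = τ`. On such a wave it acts as the
Hermitian symbol `[[0, a + ω], [a + ω̄, 0]]`, whose eigenvalues are `±‖a + ω‖`. The `p` roots
`ω` of `τ` give `2p` pairwise orthogonal Bloch waves (their overlaps are geometric sums over
`p`-th roots of unity), so the matrix of these waves is invertible and conjugates `K⁰` to a
diagonal matrix.
-/

namespace Floquet

open Complex Finset Matrix ComplexConjugate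

lemma sum_range_two_mul {M : Type*} [AddCommMonoid M] (n : ℕ) (f : ℕ → M) :
    ∑ i ∈ range (2 * n), f i = ∑ k ∈ range n, (f (2 * k) + f (2 * k + 1)) := by
  induction n with
  | zero => simp
  | succ n ih => rw [Nat.mul_succ, sum_range_succ, sum_range_succ, sum_range_succ, ih, add_assoc]

lemma geom_sum_eq_zero_of_pow_eq_one {K : Type*} [Field K] {z : K} {n : ℕ} (hz : z ≠ 1)
    (hzn : z ^ n = 1) : ∑ k ∈ range n, z ^ k = 0 := by
  rw [geom_sum_eq hz, hzn, sub_self, zero_div]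

lemma spectrum_eq_of_mul_eq_mul {R A : Type*} [CommSemiring R] [Ring A] [Algebra R A]
    {x y u : A} (hu : IsUnit u) (h : x * u = u * y) : spectrum R x = spectrum R y := by
  obtain ⟨u, rfl⟩ := hu
  have hx : x = u * y * ↑u⁻¹ := by rw [← h, Units.mul_inv_cancel_right]
  rw [hx, spectrum.units_conjugate]

/-- For `σ = ±1`, `(e^{i arg c}, σ)` is an eigenvector of `[[0, c], [c̄, 0]]` for `σ‖c‖`. -/
lemma offDiag_eigenvector (c σ : ℂ) (hσ : σ * σ = 1) :
    c * σ = σ * ‖c‖ * exp (arg c * I) ∧ conj c * exp (arg c * I) = σ * ‖c‖ * σ := by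
  have hc := norm_mul_exp_arg_mul_I c
  constructor
  · linear_combination σ * hc.symm
  · have : conj (exp (arg c * I)) * exp (arg c * I) = 1 := by
      rw [conj_mul', norm_exp_ofReal_mul_I]; simp
    have hcc := congrArg conj hc
    rw [map_mul, conj_ofReal] at hcc
    linear_combination -exp (arg c * I) * hcc + (‖c‖ : ℂ) * this - ‖c‖ * hσ

noncomputable def floquetEntry (p : ℕ) (a τ : ℂ) (i j : ℕ) : ℂ :=
  (if i + 1 = j then (if i % 2 = 0 then 1 else a) else 0) +
  (if j + 1 = i then (if j % 2 = 0 then 1 else a) else 0) +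
  (if i = 0 ∧ j = 2 * p - 1 then a / τ else 0) +
  (if i = 2 * p - 1 ∧ j = 0 then τ * a else 0)

noncomputable def floquetMatrix (p : ℕ) (a τ : ℂ) : Matrix (Fin (2 * p)) (Fin (2 * p)) ℂ :=
  of fun i j => floquetEntry p a τ i j

lemma sum_floquetEntry_mul_even {p k : ℕ} (hk : k < p) (a τ : ℂ) (x : ℕ → ℂ) :
    ∑ j ∈ range (2 * p), floquetEntry p a τ (2 * k) j * x j =
      x (2 * k + 1) + if k = 0 then a / τ * x (2 * p - 1) else a * x (2 * k - 1) := by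
  cases k <;>
  simp [floquetEntry, add_mul, sum_add_distrib, ite_mul, ite_and, Nat.mul_add, sum_ite_eq'] <;>
  split_ifs <;> first | omega | ring

lemma sum_floquetEntry_mul_odd {p k : ℕ} (hk : k < p) (a τ : ℂ) (x : ℕ → ℂ) :
    ∑ j ∈ range (2 * p), floquetEntry p a τ (2 * k + 1) j * x j =
      x (2 * k) + if k + 1 = p then τ * a * x 0 else a * x (2 * k + 2) := by
  simp [floquetEntry, add_mul, sum_add_distrib, ite_mul, ite_and, sum_ite_eq']
  split_ifs <;> first | omega | ring

noncomputable def blochWave (ω u v : ℂ) (i : ℕ) : ℂ :=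
  ω ^ ((i + 1) / 2) * if i % 2 = 0 then u else v

lemma blochWave_two_mul (ω u v : ℂ) (k : ℕ) : blochWave ω u v (2 * k) = ω ^ k * u := by
  simp [blochWave, Nat.mul_add_div]

lemma blochWave_two_mul_add_one (ω u v : ℂ) (k : ℕ) :
    blochWave ω u v (2 * k + 1) = ω ^ (k + 1) * v := by
  simp [blochWave, show (2 * k + 1 + 1) / 2 = k + 1 by omega]

lemma floquetMatrix_mulVec_blochWave {p : ℕ} {a τ ω u v μ : ℂ} (hω : ω ≠ 0) (hτ : ω ^ p = τ)
    (h₁ : (a + ω) * v = μ * u) (h₂ : (a + ω⁻¹) * u = μ * v) :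
    floquetMatrix p a τ *ᵥ (fun i : Fin (2 * p) => blochWave ω u v i) =
      μ • fun i : Fin (2 * p) => blochWave ω u v i := by
  subst hτ
  ext ⟨i, hi⟩
  simp only [mulVec, dotProduct, floquetMatrix, of_apply, Pi.smul_apply, smul_eq_mul]
  rw [Fin.sum_univ_eq_sum_range (fun j => floquetEntry p a (ω ^ p) i j * blochWave ω u v j)]
  obtain ⟨k, rfl | rfl⟩ := Nat.even_or_odd' i
  · rw [sum_floquetEntry_mul_even (by omega)]
    cases k with
    | zero =>
      rw [if_pos rfl, show 2 * p - 1 = 2 * (p - 1) + 1 by omega,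
        blochWave_two_mul_add_one ω u v (p - 1), Nat.sub_add_cancel (by omega),
        blochWave_two_mul_add_one, blochWave_two_mul]
      field_simp
      linear_combination h₁
    | succ k =>
      rw [if_neg k.succ_ne_zero, show 2 * (k + 1) - 1 = 2 * k + 1 by omega,
        blochWave_two_mul_add_one, blochWave_two_mul_add_one, blochWave_two_mul]
      linear_combination ω ^ (k + 1) * h₁
  · rw [sum_floquetEntry_mul_odd (by omega), blochWave_two_mul, blochWave_two_mul_add_one]
    have h₂' : (a * ω + 1) * u = μ * ω * v := by
      field_simp at h₂; linear_combination h₂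
    split_ifs with hlast
    · subst hlast
      rw [show (0 : ℕ) = 2 * 0 from rfl, blochWave_two_mul]
      linear_combination ω ^ k * h₂'
    · rw [show 2 * k + 2 = 2 * (k + 1) from rfl, blochWave_two_mul]
      linear_combination ω ^ k * h₂'

lemma sum_conj_blochWave_mul (p : ℕ) (ω u v ω' u' v' : ℂ) :
    ∑ i ∈ range (2 * p), conj (blochWave ω u v i) * blochWave ω' u' v' i =
      (∑ k ∈ range p, (conj ω * ω') ^ k) * (conj u * u' + conj ω * ω' * (conj v * v')) := by
  rw [sum_range_two_mul, sum_mul]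
  refine sum_congr rfl fun k _ => ?_
  rw [blochWave_two_mul, blochWave_two_mul, blochWave_two_mul_add_one, blochWave_two_mul_add_one]
  simp only [map_mul, map_pow]
  ring

noncomputable def blochRoot (p : ℕ) (φ : ℝ) (n : ℕ) : ℂ :=
  exp (((φ + 2 * Real.pi * n) / p : ℝ) * I)

lemma norm_blochRoot (p : ℕ) (φ : ℝ) (n : ℕ) : ‖blochRoot p φ n‖ = 1 :=
  norm_exp_ofReal_mul_I _

lemma blochRoot_ne_zero (p : ℕ) (φ : ℝ) (n : ℕ) : blochRoot p φ n ≠ 0 :=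
  exp_ne_zero _

lemma blochRoot_pow {p : ℕ} (hp : p ≠ 0) (φ : ℝ) (n : ℕ) :
    blochRoot p φ n ^ p = exp (φ * I) := by
  have : (p : ℂ) * (((φ + 2 * Real.pi * n) / p : ℝ) * I) = φ * I + n * (2 * Real.pi * I) := by
    push_cast
    field_simp
  rw [blochRoot, ← exp_nat_mul, this, exp_add, exp_nat_mul_two_pi_mul_I, mul_one]

lemma blochRoot_eq {p : ℕ} (hp : p ≠ 0) (φ : ℝ) (n : ℕ) :
    blochRoot p φ n = exp (2 * Real.pi * I / p) ^ n * exp ((φ / p : ℝ) * I) := by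
  rw [blochRoot, ← exp_nat_mul, ← exp_add]
  congr 1
  push_cast
  field_simp
  ring

lemma blochRoot_succ_injOn {p : ℕ} (hp : p ≠ 0) (φ : ℝ) :
    Set.InjOn (fun n => blochRoot p φ (n + 1)) (range p) := by
  have hζ := isPrimitiveRoot_exp p hp
  have := hζ.injOn_pow_mul (mul_ne_zero (exp_ne_zero (2 * Real.pi * I / p))
    (exp_ne_zero ((φ / p : ℝ) * I)))
  intro m hm n hn h
  refine this hm hn ?_
  simp only [blochRoot_eq hp, pow_succ, mul_assoc] at h ⊢
  exact h

section BlochBasis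

variable (p : ℕ) (a φ : ℝ)

noncomputable def blochEigenvalue (j : ℕ) : ℂ :=
  (-1) ^ j * ‖(a : ℂ) + blochRoot p φ (j / 2 + 1)‖

noncomputable def blochBasis : Matrix (Fin (2 * p)) (Fin (2 * p)) ℂ :=
  of fun i j => blochWave (blochRoot p φ (j / 2 + 1))
    (exp (arg (a + blochRoot p φ (j / 2 + 1)) * I)) ((-1) ^ (j : ℕ)) i

variable {p}

lemma floquetMatrix_mul_blochBasis (hp : p ≠ 0) :
    floquetMatrix p a (exp (φ * I)) * blochBasis p a φ =
      blochBasis p a φ * diagonal fun j : Fin (2 * p) => blochEigenvalue p a φ j := by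
  ext i j
  rw [mul_diagonal]
  set ω := blochRoot p φ (j / 2 + 1)
  have hω : ‖ω‖ = 1 := norm_blochRoot p φ _
  obtain ⟨h₁, h₂⟩ := offDiag_eigenvector (a + ω) ((-1) ^ (j : ℕ)) (by rw [← mul_pow]; simp)
  have hinv : (a : ℂ) + ω⁻¹ = conj ((a : ℂ) + ω) := by
    rw [map_add, conj_ofReal, inv_eq_conj hω]
  have := floquetMatrix_mulVec_blochWave (p := p) (a := a) (μ := blochEigenvalue p a φ j)
    (blochRoot_ne_zero p φ _) (blochRoot_pow hp φ _) h₁ (by rw [hinv]; exact h₂)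
  exact (congrFun this i).trans (mul_comm _ _)

lemma conjTranspose_blochBasis_mul_self (hp : p ≠ 0) :
    (blochBasis p a φ)ᴴ * blochBasis p a φ = (2 * p : ℂ) • 1 := by
  ext j j'
  simp only [mul_apply, conjTranspose_apply, blochBasis, of_apply, RCLike.star_def]
  rw [Fin.sum_univ_eq_sum_range (fun i => conj (blochWave _ _ _ i) * blochWave _ _ _ i),
    sum_conj_blochWave_mul, Matrix.smul_apply, one_apply, smul_eq_mul]
  by_cases hn : (j : ℕ) / 2 = (j' : ℕ) / 2
  · rw [hn]
    simp only [conj_mul', norm_blochRoot, norm_exp_ofReal_mul_I, map_pow, map_neg, map_one]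
    split_ifs with hj
    · subst hj
      rw [← mul_pow]
      simp
      ring
    · have hodd : Odd ((j : ℕ) + j') := by
        have : (j : ℕ) ≠ j' := fun h => hj (Fin.ext h)
        rw [Nat.odd_iff]; omega
      rw [← pow_add, hodd.neg_one_pow]
      simp
  · have hz : conj (blochRoot p φ (j / 2 + 1)) * blochRoot p φ (j' / 2 + 1) ≠ 1 := by
      rw [← inv_eq_conj (norm_blochRoot p φ _), Ne, inv_mul_eq_one₀ (blochRoot_ne_zero p φ _)]
      exact fun h => hn (blochRoot_succ_injOn hp φ (by simp; omega) (by simp; omega) h)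
    have hzp : (conj (blochRoot p φ (j / 2 + 1)) * blochRoot p φ (j' / 2 + 1)) ^ p = 1 := by
      rw [mul_pow, ← map_pow, blochRoot_pow hp, blochRoot_pow hp, conj_mul', norm_exp_ofReal_mul_I]
      simp
    rw [geom_sum_eq_zero_of_pow_eq_one hz hzp, zero_mul, if_neg (fun h => hn (by rw [h])), mul_zero]

lemma isUnit_blochBasis (hp : p ≠ 0) : IsUnit (blochBasis p a φ) := by
  have h2p : (2 * p : ℂ) ≠ 0 := by exact_mod_cast (by omega : 2 * p ≠ 0)
  refine (isUnit_iff_isUnit_det _).mpr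
    (isUnit_det_of_left_inverse (B := (2 * p : ℂ)⁻¹ • (blochBasis p a φ)ᴴ) ?_)
  rw [smul_mul_assoc, conjTranspose_blochBasis_mul_self a φ hp, smul_smul, inv_mul_cancel₀ h2p,
    one_smul]

lemma spectrum_floquetMatrix (hp : p ≠ 0) :
    spectrum ℂ (floquetMatrix p a (exp (φ * I))) =
      Set.range fun j : Fin (2 * p) => blochEigenvalue p a φ j := by
  rw [spectrum_eq_of_mul_eq_mul (isUnit_blochBasis a φ hp) (floquetMatrix_mul_blochBasis a φ hp),
    spectrum_diagonal]

lemma range_blochEigenvalue :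
    (Set.range fun j : Fin (2 * p) => blochEigenvalue p a φ j) =
      {z : ℂ | ∃ n ∈ Icc 1 p,
        z = (‖(a : ℂ) + blochRoot p φ n‖ : ℂ) ∨ z = -(‖(a : ℂ) + blochRoot p φ n‖ : ℂ)} := by
  ext z
  constructor
  · rintro ⟨j, rfl⟩
    refine ⟨j / 2 + 1, mem_Icc.mpr ⟨by omega, by omega⟩, ?_⟩
    rcases Nat.even_or_odd (j : ℕ) with h | h
    · simp [blochEigenvalue, h.neg_one_pow]
    · simp [blochEigenvalue, h.neg_one_pow]
  · rintro ⟨n, hn, h | h⟩ <;> rw [mem_Icc] at hn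
    · refine ⟨⟨2 * (n - 1), by omega⟩, ?_⟩
      simp [blochEigenvalue, h, Nat.sub_add_cancel hn.1]
    · refine ⟨⟨2 * (n - 1) + 1, by omega⟩, ?_⟩
      simp [blochEigenvalue, h, show (2 * (n - 1) + 1) / 2 + 1 = n by omega, pow_succ]

end BlochBasis
end Floquet

open Complex in
theorem floquet_matrix_eigenvalues_general (p : ℕ) (hp : 1 ≤ p) (a φ : ℝ)
    (K : Matrix (Fin (2 * p)) (Fin (2 * p)) ℂ)
    (hK : ∀ i j : Fin (2 * p), K i j =
      (if (i : ℕ) + 1 = (j : ℕ) then (if (i : ℕ) % 2 = 0 then 1 else (a : ℂ)) else 0) +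
      (if (j : ℕ) + 1 = (i : ℕ) then (if (j : ℕ) % 2 = 0 then 1 else (a : ℂ)) else 0) +
      (if (i : ℕ) = 0 ∧ (j : ℕ) = 2 * p - 1 then
        (a : ℂ) / Complex.exp (φ * Complex.I) else 0) +
      (if (i : ℕ) = 2 * p - 1 ∧ (j : ℕ) = 0 then
        Complex.exp (φ * Complex.I) * (a : ℂ) else 0)) :
    spectrum ℂ K =
      {z : ℂ | ∃ n ∈ Finset.Icc 1 p,
        z = (‖(a : ℂ) +
              Complex.exp (((φ + 2 * Real.pi * n) / p : ℝ) * Complex.I)‖ : ℂ) ∨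
        z = -(‖(a : ℂ) +
              Complex.exp (((φ + 2 * Real.pi * n) / p : ℝ) * Complex.I)‖ : ℂ)} := by
  have hK' : K = Floquet.floquetMatrix p a (exp (φ * I)) := Matrix.ext hK
  rw [hK', Floquet.spectrum_floquetMatrix a φ (by omega), Floquet.range_blochEigenvalue]
  rfl

open Complex in
/-- Eigenvalues of the Floquet matrix `K⁰(e^{iφ}, a)` of the 2-periodic Jacobi operator with
alternating off-diagonal entries `1, a, 1, a, …` on `2p` sites and `e^{iφ}`-twisted boundary
conditions: they are exactly `±|a + e^{i(φ+2πn)/p}|`, `n ∈ {1,…,p}`. -/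
theorem floquet_matrix_eigenvalues (p : ℕ) (hp : 1 ≤ p) (a φ : ℝ) (ha : 0 < a)
    (K : Matrix (Fin (2 * p)) (Fin (2 * p)) ℂ)
    (hK : ∀ i j : Fin (2 * p), K i j =
      (if (i : ℕ) + 1 = (j : ℕ) then (if (i : ℕ) % 2 = 0 then 1 else (a : ℂ)) else 0) +
      (if (j : ℕ) + 1 = (i : ℕ) then (if (j : ℕ) % 2 = 0 then 1 else (a : ℂ)) else 0) +
      (if (i : ℕ) = 0 ∧ (j : ℕ) = 2 * p - 1 then
        (a : ℂ) / Complex.exp (φ * Complex.I) else 0) +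
      (if (i : ℕ) = 2 * p - 1 ∧ (j : ℕ) = 0 then
        Complex.exp (φ * Complex.I) * (a : ℂ) else 0)) :
    spectrum ℂ K =
      {z : ℂ | ∃ n ∈ Finset.Icc 1 p,
        z = (‖(a : ℂ) +
              Complex.exp (((φ + 2 * Real.pi * n) / p : ℝ) * Complex.I)‖ : ℂ) ∨
        z = -(‖(a : ℂ) +
              Complex.exp (((φ + 2 * Real.pi * n) / p : ℝ) * Complex.I)‖ : ℂ)} :=
  floquet_matrix_eigenvalues_general p hp a φ K hK
end

section
/- For p ≥ 2 and n ∈ {1,…,p−1} with τ_n = e^{iπn/p} and a > 0, a ≠ 1: 1 + τ_n^{p−1} e^{2i·arg(a+τ_n)} ≠ 0; and if a = 1, then 1 + τ_n^{p−1} e^{2i·arg(1+τ_n)} = 0 if and only if n is odd (using arg(1+τ_n) = πn/(2p)). -/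
/-!
Since `conj z * exp (2 * arg z * I) = z`, the equation `1 + c * exp (2 * arg z * I) = 0` is
equivalent to `conj z + c * z = 0`. For `z = a + τ` with `‖τ‖ = 1`, multiplying by `τ` turns it
into `a * τ + 1 + τ ^ p * (a + τ) = 0`, and `τ ^ p = (-1) ^ n`. For even `n` this factors as
`(a + 1) * (1 + τ) = 0`, for odd `n` as `(a - 1) * (τ - 1) = 0`; since `0 < τ.im`, only `a = 1`
with `n` odd survives.
-/

open Complex ComplexConjugate
open scoped Real

namespace Complex

theorem conj_mul_exp_two_arg_mul_I (z : ℂ) : conj z * exp (2 * arg z * I) = z := by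
  have h := norm_mul_exp_arg_mul_I z
  calc conj z * exp (2 * arg z * I)
      = conj (‖z‖ * exp (arg z * I)) * exp (2 * arg z * I) := by rw [h]
    _ = ‖z‖ * exp (arg z * I) := by
      rw [map_mul, conj_ofReal, ← exp_conj, map_mul, conj_ofReal, conj_I, mul_assoc, ← exp_add]
      ring_nf
    _ = z := h

theorem one_add_mul_exp_two_arg_mul_I_eq_zero_iff {z : ℂ} (hz : z ≠ 0) (c : ℂ) :
    1 + c * exp (2 * arg z * I) = 0 ↔ conj z + c * z = 0 := by
  rw [← mul_eq_zero_iff_left ((map_ne_zero (conj : ℂ →+* ℂ)).mpr hz), mul_add, mul_one,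
    mul_left_comm, conj_mul_exp_two_arg_mul_I]

theorem conj_ofReal_add_add_mul_eq_zero_iff {τ : ℂ} (hτ : ‖τ‖ = 1) (a : ℝ) (c : ℂ) :
    conj (a + τ) + c * (a + τ) = 0 ↔ a * τ + 1 + c * τ * (a + τ) = 0 := by
  have hτ0 : τ ≠ 0 := norm_ne_zero_iff.mp (hτ ▸ one_ne_zero)
  have h : τ * (conj (a + τ) + c * (a + τ)) = a * τ + 1 + c * τ * (a + τ) := by
    rw [map_add, conj_ofReal, ← inv_eq_conj hτ]
    linear_combination mul_inv_cancel₀ hτ0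
  rw [← mul_eq_zero_iff_left hτ0, h]

theorem ofReal_mul_add_one_add_neg_one_pow_mul_eq_zero_iff {τ : ℂ} (hτ₁ : τ ≠ 1)
    (hτ₂ : τ ≠ -1) {a : ℝ} (ha : a ≠ -1) (n : ℕ) :
    a * τ + 1 + (-1) ^ n * (a + τ) = 0 ↔ Odd n ∧ a = 1 := by
  rcases n.even_or_odd with hn | hn
  · rw [hn.neg_one_pow, one_mul, iff_false_intro (Nat.not_odd_iff_even.mpr hn), false_and,
      iff_false]
    have h₁ : (a : ℂ) + 1 ≠ 0 := by exact_mod_cast (fun h => ha (by linarith))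
    have h₂ : 1 + τ ≠ 0 := fun h => hτ₂ (by linear_combination h)
    intro h
    exact mul_ne_zero h₁ h₂ (by linear_combination h)
  · rw [hn.neg_one_pow, iff_true_intro hn, true_and]
    have h₂ : τ - 1 ≠ 0 := sub_ne_zero.mpr hτ₁
    constructor
    · intro h
      have ha₁ : (a : ℂ) - 1 = 0 := (mul_eq_zero_iff_right h₂).mp (by linear_combination h)
      exact_mod_cast sub_eq_zero.mp ha₁
    · rintro rfl
      push_cast
      ring

theorem exp_pi_mul_div_mul_I_pow {p : ℕ} (hp : p ≠ 0) (n : ℕ) :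
    exp (π * n / p * I) ^ p = (-1) ^ n := by
  rw [← exp_nat_mul, ← exp_pi_mul_I, ← exp_nat_mul]
  congr 1
  field_simp

theorem exp_pi_mul_div_mul_I_eq_exp_ofReal (n p : ℕ) :
    exp (π * n / p * I) = exp ((π * n / p : ℝ) * I) := by
  push_cast
  rfl

theorem im_exp_pi_mul_div_mul_I_pos {n p : ℕ} (hn : 0 < n) (hnp : n < p) :
    0 < (exp (π * n / p * I)).im := by
  rw [exp_pi_mul_div_mul_I_eq_exp_ofReal, exp_ofReal_mul_I_im]
  have hp : (0 : ℝ) < p := by exact_mod_cast hn.trans hnp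
  apply Real.sin_pos_of_pos_of_lt_pi (by positivity)
  rw [div_lt_iff₀ hp]
  gcongr

end Complex

open Complex in
theorem gap_nonvanishing_condition_general (p : ℕ)
    (n : ℕ) (hn : n ∈ Finset.Icc 1 (p - 1))
    (τ : ℂ) (hτ : τ = Complex.exp (Real.pi * n / p * Complex.I)) :
    (∀ a : ℝ, 0 < a → a ≠ 1 →
      1 + τ ^ (p - 1) * Complex.exp (2 * Complex.arg ((a : ℂ) + τ) * Complex.I) ≠ 0) ∧
    (1 + τ ^ (p - 1) * Complex.exp (2 * Complex.arg (1 + τ) * Complex.I) = 0 ↔ Odd n) := by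
  obtain ⟨hn₀, hnp⟩ := Finset.mem_Icc.mp hn
  have hp : p ≠ 0 := by omega
  have hτ_norm : ‖τ‖ = 1 := by
    rw [hτ, exp_pi_mul_div_mul_I_eq_exp_ofReal, norm_exp_ofReal_mul_I]
  have hτ_im : 0 < τ.im := hτ ▸ im_exp_pi_mul_div_mul_I_pos hn₀ (by omega)
  have hτ_pow : τ ^ (p - 1) * τ = (-1) ^ n := by
    rw [pow_sub_one_mul hp, hτ, exp_pi_mul_div_mul_I_pow hp]
  have hτ₁ : τ ≠ 1 := fun h => by simp [h] at hτ_im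
  have hτ₂ : τ ≠ -1 := fun h => by simp [h] at hτ_im
  have key (a : ℝ) (ha : 0 < a) :
      1 + τ ^ (p - 1) * exp (2 * arg (a + τ) * I) = 0 ↔ Odd n ∧ a = 1 := by
    have hz : (a : ℂ) + τ ≠ 0 := fun h => by simpa [hτ_im.ne'] using congrArg im h
    rw [one_add_mul_exp_two_arg_mul_I_eq_zero_iff hz, conj_ofReal_add_add_mul_eq_zero_iff hτ_norm,
      hτ_pow, ofReal_mul_add_one_add_neg_one_pow_mul_eq_zero_iff hτ₁ hτ₂ (by linarith)]
  refine ⟨fun a ha ha₁ h => ha₁ ((key a ha).mp h).2, ?_⟩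
  simpa using key 1 one_pos

open Complex in
theorem gap_nonvanishing_condition (p : ℕ) (hp : 2 ≤ p)
    (n : ℕ) (hn : n ∈ Finset.Icc 1 (p - 1))
    (τ : ℂ) (hτ : τ = Complex.exp (Real.pi * n / p * Complex.I)) :
    (∀ a : ℝ, 0 < a → a ≠ 1 →
      1 + τ ^ (p - 1) * Complex.exp (2 * Complex.arg ((a : ℂ) + τ) * Complex.I) ≠ 0) ∧
    (1 + τ ^ (p - 1) * Complex.exp (2 * Complex.arg (1 + τ) * Complex.I) = 0 ↔ Odd n) :=
  gap_nonvanishing_condition_general p n hn τ hτ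
end
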